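/- arXiv:1202.3410 — 2 statements merged into one kernel-verified Lean document; each statement's English description precedes it below -/
import Mathlib

section
/- Let P be a polynomial. In an associative algebra with su(2) generators satisfying [J3,J-] = -J- and [J+,J-] = 2J3, one has [J+, P(J-)] = 2·J3·P'(J-) + J-·P''(J-). -/
/-!
Induct on `P` along `P ↦ P * X`. The commutator with `J+` obeys the Leibniz rule, so
`[J+, P(J-) J-] = [J+, P(J-)] J- + P(J-) · 2 J3`, and the first-order identity
`[J3, P(J-)] = -J- P'(J-)` (valid because `[J3, J-] = -J-` commutes with `J-`) moves `J3`
to the left.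
-/

open Polynomial

namespace Polynomial

variable {R : Type*} [CommSemiring R]

theorem induction_on_mul_X {M : R[X] → Prop} (p : R[X]) (C : ∀ a, M (C a))
    (add : ∀ p q, M p → M q → M (p + q)) (mul_X : ∀ p, M p → M (p * X)) : M p :=
  p.induction_on C add fun n a h => by rw [pow_succ, ← mul_assoc]; exact mul_X _ h

variable {A : Type*} [Ring A] [Algebra R A]

theorem commute_aeval_of_commute {a b : A} (h : Commute a b) (p : R[X]) :
    Commute a (aeval b p) :=
  Algebra.commute_of_mem_adjoin_singleton_of_commute (aeval_mem_adjoin_singleton R b) h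

theorem commutator_aeval_of_commute {x b d : A} (hxb : x * b - b * x = d) (hdb : Commute d b)
    (p : R[X]) : x * aeval b p - aeval b p * x = d * aeval b (derivative p) := by
  induction p using induction_on_mul_X with
  | C a => simp [Algebra.commutes]
  | add p q hp hq =>
    rw [map_add, add_mul, mul_add, add_sub_add_comm, hp, hq, derivative_add, map_add, mul_add]
  | mul_X p hp =>
    simp only [derivative_mul, derivative_X, mul_one, map_add, map_mul, aeval_X]
    calc x * (aeval b p * b) - aeval b p * b * x
        = (x * aeval b p - aeval b p * x) * b + aeval b p * (x * b - b * x) := by noncomm_ring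
      _ = d * (aeval b (derivative p) * b + aeval b p) := by
        rw [hp, hxb, ← (commute_aeval_of_commute hdb p).eq]
        noncomm_ring

end Polynomial

theorem su2_comm_Jp_polyJm_general {A : Type*} [Ring A] [Algebra ℝ A]
    (Jp Jm J3 : A)
    (h2 : J3 * Jm - Jm * J3 = -Jm)
    (h3 : Jp * Jm - Jm * Jp = 2 * J3)
    (P : Polynomial ℝ) :
    Jp * (Polynomial.aeval Jm P) - (Polynomial.aeval Jm P) * Jp =
      2 * J3 * Polynomial.aeval Jm (Polynomial.derivative P) +
        Jm * Polynomial.aeval Jm (Polynomial.derivative (Polynomial.derivative P)) := by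
  induction P using induction_on_mul_X with
  | C a => simp [Algebra.commutes]
  | add p q hp hq =>
    rw [map_add, add_mul, mul_add, add_sub_add_comm, hp, hq]
    simp only [map_add, mul_add]
    abel
  | mul_X p hp =>
    have hJ3 : aeval Jm p * J3 = J3 * aeval Jm p + Jm * aeval Jm (derivative p) := by
      rw [← sub_eq_iff_eq_add', ← neg_sub,
        commutator_aeval_of_commute h2 (Commute.refl Jm).neg_left p, neg_mul, neg_neg]
    simp only [derivative_mul, derivative_X, mul_one, map_add, map_mul, aeval_X]
    calc Jp * (aeval Jm p * Jm) - aeval Jm p * Jm * Jp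
        = (Jp * aeval Jm p - aeval Jm p * Jp) * Jm + aeval Jm p * (Jp * Jm - Jm * Jp) := by
          noncomm_ring
      _ = _ := by
        rw [hp, h3, two_mul, mul_add, hJ3]
        noncomm_ring

/-- For a polynomial `P`, `[J+, P(J-)] = 2·J3·P'(J-) + J-·P''(J-)` under the
su(2) relations. -/
theorem su2_comm_Jp_polyJm {A : Type*} [Ring A] [Algebra ℝ A]
    (Jp Jm J3 : A)
    (h1 : J3 * Jp - Jp * J3 = Jp)
    (h2 : J3 * Jm - Jm * J3 = -Jm)
    (h3 : Jp * Jm - Jm * Jp = 2 * J3)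
    (P : Polynomial ℝ) :
    Jp * (Polynomial.aeval Jm P) - (Polynomial.aeval Jm P) * Jp =
      2 * J3 * Polynomial.aeval Jm (Polynomial.derivative P) +
        Jm * Polynomial.aeval Jm (Polynomial.derivative (Polynomial.derivative P)) :=
  su2_comm_Jp_polyJm_general Jp Jm J3 h2 h3 P
end

section
/- In a finite-dimensional representation (or for nilpotent J-), for any polynomial P with P(0)=0 one has e^{P(J-)} · J+ · e^{-P(J-)} = J+ - 2·J3·P'(J-) - J-·(P''(J-) + P'(J-)^2), where the su(2) relations [J3,J±] = ±J±, [J+,J-] = 2J3 hold and J- is nilpotent so the exponentials are finite sums. -/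
/-- The su(2) spin-N/2 raising operator on `ℂ^{N+1}`. -/
noncomputable def Jp (N : ℕ) : Matrix (Fin (N + 1)) (Fin (N + 1)) ℂ :=
  Matrix.of fun i j =>
    if (i : ℕ) = (j : ℕ) + 1 then (Real.sqrt (((j : ℕ) + 1) * (N - (j : ℕ))) : ℂ) else 0

/-- The su(2) spin-N/2 lowering operator on `ℂ^{N+1}`. -/
noncomputable def Jm (N : ℕ) : Matrix (Fin (N + 1)) (Fin (N + 1)) ℂ :=
  Matrix.of fun i j =>
    if (i : ℕ) + 1 = (j : ℕ) then (Real.sqrt ((j : ℕ) * (N - (j : ℕ) + 1)) : ℂ) else 0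

/-- The su(2) spin-N/2 diagonal generator on `ℂ^{N+1}`. -/
noncomputable def J3 (N : ℕ) : Matrix (Fin (N + 1)) (Fin (N + 1)) ℂ :=
  Matrix.diagonal fun k => ((k : ℕ) : ℂ) - (N : ℂ) / 2


/-!
For `A = P(J-)`, nilpotent because `J-` is and `P(0) = 0`, both exponentials are finite sums and
`e^A B e^{-A} = B + [A, B] + ½ [A, [A, B]]` as soon as `[A, [A, [A, B]]] = 0`. The brackets with a
polynomial in `J-` follow from the truncated Leibniz rule
`[f(a), b] = [a, b] f'(a) + [a, [a, b]] (f''/2)(a)` (with `f''/2 = hasseDeriv 2 f`), valid when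
`[a, [a, [a, b]]] = 0`: with `[J-, J+] = -2 J3` and `[J-, J3] = J-` it gives
`[A, J+] = -2 J3 P'(J-) - J- P''(J-)` and `[A, [A, J+]] = -2 J- P'(J-)²`, a polynomial in `J-`,
so the series stops there.
-/

open Polynomial Matrix
open scoped Nat

section LieChain

variable {A : Type*} [Ring A] {a b c d : A}

theorem lie_eq_iff_mul_eq_mul_add : ⁅a, b⁆ = c ↔ a * b = b * a + c := by
  rw [Ring.lie_def, sub_eq_iff_eq_add']

theorem pow_mul_eq_of_lie_chain (hc : ⁅a, b⁆ = c) (hd : ⁅a, c⁆ = d) (h0 : ⁅a, d⁆ = 0)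
    (n : ℕ) : a ^ n * b = b * a ^ n + n • (c * a ^ (n - 1)) + n.choose 2 • (d * a ^ (n - 2)) := by
  rw [lie_eq_iff_mul_eq_mul_add] at hc hd
  rw [← commute_iff_lie_eq] at h0
  induction n with
  | zero => simp
  | succ n ih =>
    rw [pow_succ', mul_assoc, ih]
    rcases n with _ | _ | n
    · simp [hc]
    · simp only [mul_add, mul_smul_comm, ← mul_assoc, hc, hd, add_mul]
      simp only [mul_assoc, ← pow_succ']
      norm_num [two_mul]
      abel
    · simp only [mul_add, mul_smul_comm, ← mul_assoc, hc, hd, h0.eq, add_mul]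
      simp only [mul_assoc, ← pow_succ', Nat.choose_succ_succ' (n + 2) 1, Nat.choose_one_right]
      simp only [Nat.add_sub_cancel, show n + 1 + 1 + 1 - 2 = n + 1 by omega]
      push_cast
      module

theorem lie_aeval_of_lie_chain {K : Type*} [CommRing K] [Algebra K A]
    (hc : ⁅a, b⁆ = c) (hd : ⁅a, c⁆ = d) (h0 : ⁅a, d⁆ = 0) (f : K[X]) :
    ⁅aeval a f, b⁆ = c * aeval a (derivative f) + d * aeval a (hasseDeriv 2 f) := by
  rw [lie_eq_iff_mul_eq_mul_add, ← add_assoc]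
  induction f using Polynomial.induction_on' with
  | add p q hp hq => simp only [map_add, add_mul, mul_add, hp, hq]; abel
  | monomial n r =>
    simp only [aeval_monomial, derivative_monomial, hasseDeriv_monomial, ← Algebra.smul_def,
      smul_mul_assoc, mul_smul_comm, pow_mul_eq_of_lie_chain hc hd h0]
    module

end LieChain

section NilpotentExp

variable {M : Type*} [AddCommGroup M] [Module ℚ M]

theorem inv_factorial_succ_smul_nsmul (n : ℕ) (x : M) :
    ((n + 1)! : ℚ)⁻¹ • ((n + 1) • x) = (n ! : ℚ)⁻¹ • x := by
  rw [← Nat.cast_smul_eq_nsmul ℚ, smul_smul, Nat.factorial_succ]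
  push_cast
  field_simp

theorem inv_factorial_add_two_smul_choose_two_nsmul (n : ℕ) (x : M) :
    ((n + 2)! : ℚ)⁻¹ • ((n + 2).choose 2 • x) = (2⁻¹ : ℚ) • (n ! : ℚ)⁻¹ • x := by
  rw [← Nat.cast_smul_eq_nsmul ℚ, smul_smul, smul_smul, Nat.cast_choose_two, Nat.factorial_succ,
    Nat.factorial_succ]
  push_cast
  congr 1
  field_simp
  ring

variable {A : Type*} [Ring A] [Algebra ℚ A] {a : A}

theorem IsNilpotent.exp_mul_eq_of_lie_lie_lie_eq_zero (ha : IsNilpotent a) {b : A}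
    (h : ⁅a, ⁅a, ⁅a, b⁆⁆⁆ = 0) :
    exp a * b = (b + ⁅a, b⁆ + (2⁻¹ : ℚ) • ⁅a, ⁅a, b⁆⁆) * exp a := by
  obtain ⟨k, hk⟩ := ha
  have hexp (m : ℕ) (hm : k ≤ m) : exp a = ∑ i ∈ Finset.range m, (i ! : ℚ)⁻¹ • a ^ i :=
    exp_eq_sum (pow_eq_zero_of_le hm hk)
  have hfirst : ∑ n ∈ Finset.range (k + 2), (n ! : ℚ)⁻¹ • (n • (⁅a, b⁆ * a ^ (n - 1)))
      = ⁅a, b⁆ * exp a := by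
    rw [Finset.sum_range_succ', hexp (k + 1) (by omega), Finset.mul_sum]
    simp only [zero_smul, smul_zero, add_zero, Nat.add_sub_cancel, inv_factorial_succ_smul_nsmul,
      mul_smul_comm]
  have hsecond :
      ∑ n ∈ Finset.range (k + 2), (n ! : ℚ)⁻¹ • (n.choose 2 • (⁅a, ⁅a, b⁆⁆ * a ^ (n - 2)))
        = (2⁻¹ : ℚ) • ⁅a, ⁅a, b⁆⁆ * exp a := by
    rw [Finset.sum_range_succ', Finset.sum_range_succ', hexp k le_rfl, Finset.mul_sum]
    have h1 : (1 : ℕ).choose 2 = 0 := rfl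
    have h2 (n : ℕ) : n + 1 + 1 - 2 = n := rfl
    simp only [Nat.choose_zero_succ, zero_add, h1, h2, zero_smul, smul_zero, add_zero,
      inv_factorial_add_two_smul_choose_two_nsmul, mul_smul_comm, smul_mul_assoc,
      smul_comm (2⁻¹ : ℚ)]
  rw [hexp (k + 2) (by omega), Finset.sum_mul]
  simp only [smul_mul_assoc, pow_mul_eq_of_lie_chain rfl rfl h, smul_add, Finset.sum_add_distrib]
  rw [hfirst, hsecond, hexp (k + 2) (by omega), Finset.mul_sum, Finset.mul_sum, Finset.mul_sum]
  simp only [mul_smul_comm, add_mul, smul_add, Finset.sum_add_distrib]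

theorem IsNilpotent.exp_mul_mul_exp_neg_of_lie_lie_lie_eq_zero (ha : IsNilpotent a) {b : A}
    (h : ⁅a, ⁅a, ⁅a, b⁆⁆⁆ = 0) :
    exp a * b * exp (-a) = b + ⁅a, b⁆ + (2⁻¹ : ℚ) • ⁅a, ⁅a, b⁆⁆ := by
  rw [ha.exp_mul_eq_of_lie_lie_lie_eq_zero h, mul_assoc, exp_mul_exp_neg_self ha, mul_one]

theorem NormedSpace.exp_eq_isNilpotent_exp [TopologicalSpace A] [IsTopologicalRing A]
    (ha : IsNilpotent a) : NormedSpace.exp a = IsNilpotent.exp a := by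
  obtain ⟨k, hk⟩ := ha
  rw [NormedSpace.exp_eq_tsum_rat, IsNilpotent.exp_eq_sum hk]
  exact tsum_eq_sum fun n hn => by
    rw [pow_eq_zero_of_le (by simpa using hn) hk, smul_zero]

end NilpotentExp

theorem Jp_mul_Jm (N : ℕ) :
    Jp N * Jm N = diagonal fun k : Fin (N + 1) => ((k : ℕ) : ℂ) * (N - (k : ℕ) + 1) := by
  ext i j
  rw [mul_apply]
  by_cases hij : i = j
  · subst hij
    rw [diagonal_apply_eq]
    obtain hi | ⟨m, hm⟩ : (i : ℕ) = 0 ∨ ∃ m, (i : ℕ) = m + 1 := by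
      rcases (i : ℕ) with _ | m <;> simp
    · refine (Finset.sum_eq_zero fun k _ => ?_).trans (by simp [hi])
      simp [Jp, hi]
    · rw [Finset.sum_eq_single ⟨m, by omega⟩ (fun k _ hk => ?_) (by simp)]
      · have hmN : (m : ℝ) + 1 ≤ N := by exact_mod_cast (show m + 1 ≤ N by omega)
        simp only [Jp, Jm, of_apply, hm, if_true, ← Complex.ofReal_mul]
        have e : ((m + 1 : ℕ) : ℝ) * (N - (m + 1 : ℕ) + 1) = (m + 1) * (N - m) := by
          push_cast; ring
        rw [e, Real.mul_self_sqrt (mul_nonneg (by positivity) (by linarith))]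
        push_cast; ring
      · have : (i : ℕ) ≠ k + 1 := fun h => hk (Fin.ext (by dsimp only; omega))
        simp [Jp, this]
  · refine (Finset.sum_eq_zero fun k _ => ?_).trans (diagonal_apply_ne _ hij).symm
    simp only [Jp, Jm, of_apply]
    split_ifs with h1 h2 <;> first | exact absurd (Fin.ext (by omega)) hij | simp

theorem Jm_mul_Jp (N : ℕ) :
    Jm N * Jp N = diagonal fun k : Fin (N + 1) => (((k : ℕ) : ℂ) + 1) * (N - (k : ℕ)) := by
  ext i j
  rw [mul_apply]
  by_cases hij : i = j
  · subst hij
    rw [diagonal_apply_eq]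
    by_cases hi : (i : ℕ) < N
    · rw [Finset.sum_eq_single ⟨i + 1, by omega⟩ (fun k _ hk => ?_) (by simp)]
      · have hiN : ((i : ℕ) : ℝ) + 1 ≤ N := by exact_mod_cast hi
        simp only [Jp, Jm, of_apply, if_true, ← Complex.ofReal_mul]
        have e : (((i : ℕ) + 1 : ℕ) : ℝ) * (N - ((i : ℕ) + 1 : ℕ) + 1) =
            ((i : ℕ) + 1) * (N - (i : ℕ)) := by
          push_cast; ring
        rw [e, Real.mul_self_sqrt (mul_nonneg (by positivity) (by linarith))]
        push_cast; ring
      · have : (i : ℕ) + 1 ≠ k := fun h => hk (Fin.ext (by dsimp only; omega))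
        simp [Jm, this]
    · have hiN : (i : ℕ) = N := by omega
      refine (Finset.sum_eq_zero fun k _ => ?_).trans (by simp [hiN])
      have : (i : ℕ) + 1 ≠ k := by omega
      simp [Jm, this]
  · refine (Finset.sum_eq_zero fun k _ => ?_).trans (diagonal_apply_ne _ hij).symm
    simp only [Jp, Jm, of_apply]
    split_ifs with h1 h2 <;> first | exact absurd (Fin.ext (by omega)) hij | simp

theorem lie_Jm_Jp (N : ℕ) : ⁅Jm N, Jp N⁆ = -((2 : ℂ) • J3 N) := by
  rw [Ring.lie_def, Jp_mul_Jm, Jm_mul_Jp, ← neg_sub, diagonal_sub, J3, ← diagonal_smul]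
  congr 2
  funext k
  simp only [Pi.smul_apply, smul_eq_mul]
  ring

theorem lie_Jm_J3 (N : ℕ) : ⁅Jm N, J3 N⁆ = Jm N := by
  ext i j
  simp only [Ring.lie_def, J3, diagonal_mul, mul_diagonal, Matrix.sub_apply, Jm, of_apply]
  split_ifs with h
  · have : ((j : ℕ) : ℂ) = (i : ℕ) + 1 := by exact_mod_cast h.symm
    rw [this]; ring
  · simp

theorem Jm_pow_apply_eq_zero (N k : ℕ) (i j : Fin (N + 1)) (h : (j : ℕ) < i + k) :
    (Jm N ^ k) i j = 0 := by
  induction k generalizing j with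
  | zero => exact one_apply_ne (by rintro rfl; omega)
  | succ k ih =>
    rw [pow_succ, mul_apply]
    refine Finset.sum_eq_zero fun l _ => ?_
    by_cases hl : (l : ℕ) + 1 = j
    · rw [ih l (by omega), zero_mul]
    · simp [Jm, hl]

theorem isNilpotent_Jm (N : ℕ) : IsNilpotent (Jm N) :=
  ⟨N + 1, ext fun i j => Jm_pow_apply_eq_zero N (N + 1) i j (by omega)⟩

theorem isNilpotent_aeval_of_eval_zero {R B : Type*} [CommRing R] [Ring B] [Algebra R B]
    {x : B} (hx : IsNilpotent x) {P : R[X]} (hP : P.eval 0 = 0) : IsNilpotent (aeval x P) := by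
  obtain ⟨g, rfl⟩ : X ∣ P := by rwa [X_dvd_iff, coeff_zero_eq_eval_zero]
  rw [map_mul]
  exact ((Commute.all X g).map (aeval x)).isNilpotent_mul_right (by rwa [aeval_X])

theorem commute_aeval_self_mul_aeval {R B : Type*} [CommRing R] [Ring B] [Algebra R B] (x : B)
    (p q : R[X]) : Commute (aeval x p) (x * aeval x q) := by
  have hcomm := (Commute.all p (X * q)).map (aeval x)
  rwa [map_mul, aeval_X] at hcomm

theorem lie_mul_of_commute {B : Type*} [Ring B] {a u v : B} (h : Commute a v) :
    ⁅a, u * v⁆ = ⁅a, u⁆ * v := by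
  rw [Ring.lie_def, Ring.lie_def, sub_mul, mul_assoc u v, ← h.eq, ← mul_assoc, ← mul_assoc]

section PolynomialInJm

variable (N : ℕ) (P : ℂ[X])

theorem lie_aeval_Jm_J3 : ⁅aeval (Jm N) P, J3 N⁆ = Jm N * aeval (Jm N) (derivative P) := by
  have hd : ⁅Jm N, Jm N⁆ = 0 := by rw [Ring.lie_def, sub_self]
  have h0 : ⁅Jm N, (0 : Matrix (Fin (N + 1)) (Fin (N + 1)) ℂ)⁆ = 0 := by
    rw [Ring.lie_def, mul_zero, zero_mul, sub_zero]
  simpa using lie_aeval_of_lie_chain (lie_Jm_J3 N) hd h0 P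

theorem lie_aeval_Jm_Jp : ⁅aeval (Jm N) P, Jp N⁆ =
    -((2 : ℂ) • (J3 N * aeval (Jm N) (derivative P))) -
      Jm N * aeval (Jm N) (derivative (derivative P)) := by
  have hd : ⁅Jm N, -((2 : ℂ) • J3 N)⁆ = -((2 : ℂ) • ⁅Jm N, J3 N⁆) := by
    simp only [Ring.lie_def, mul_neg, neg_mul, mul_smul_comm, smul_mul_assoc]
    module
  rw [lie_Jm_J3] at hd
  have h0 : ⁅Jm N, -((2 : ℂ) • Jm N)⁆ = 0 := by simp [Ring.lie_def]
  have hP'' : derivative (derivative P) = (2 : ℂ) • hasseDeriv 2 P := by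
    rw [ofNat_smul_eq_nsmul (R := ℂ)]
    simpa using (congrFun (factorial_smul_hasseDeriv 2) P).symm
  rw [lie_aeval_of_lie_chain (lie_Jm_Jp N) hd h0, hP'', map_smul]
  simp only [neg_mul, smul_mul_assoc, mul_smul_comm]
  abel

theorem lie_aeval_Jm_lie_aeval_Jm_Jp : ⁅aeval (Jm N) P, ⁅aeval (Jm N) P, Jp N⁆⁆ =
    -((2 : ℂ) • (Jm N * aeval (Jm N) (derivative P) ^ 2)) := by
  have hJ3 : ⁅aeval (Jm N) P, J3 N * aeval (Jm N) (derivative P)⁆ =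
      Jm N * aeval (Jm N) (derivative P) ^ 2 := by
    rw [lie_mul_of_commute ((Commute.all P _).map (aeval (Jm N))), lie_aeval_Jm_J3, mul_assoc, sq]
  have hJm := commute_aeval_self_mul_aeval (Jm N) P (derivative (derivative P))
  rw [lie_aeval_Jm_Jp, ← hJ3]
  simp only [Ring.lie_def, mul_sub, sub_mul, mul_neg, neg_mul, mul_smul_comm, smul_mul_assoc,
    hJm.eq]
  module

end PolynomialInJm

/-- `e^{P(J-)} J+ e^{-P(J-)} = J+ - 2 J3 P'(J-) - J- (P''(J-) + P'(J-)²)` for a polynomial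
`P` with `P(0) = 0`, in the spin-N/2 representation (where `J-` is nilpotent). -/
theorem exp_polyJm_conj_Jp (N : ℕ) (P : Polynomial ℂ) (hP : P.eval 0 = 0) :
    NormedSpace.exp (Polynomial.aeval (Jm N) P) * Jp N *
        NormedSpace.exp (-(Polynomial.aeval (Jm N) P)) =
      Jp N - 2 * (J3 N * Polynomial.aeval (Jm N) (Polynomial.derivative P)) -
        Jm N * (Polynomial.aeval (Jm N) (Polynomial.derivative (Polynomial.derivative P)) +
          (Polynomial.aeval (Jm N) (Polynomial.derivative P)) ^ 2) := by
  have hA := isNilpotent_aeval_of_eval_zero (isNilpotent_Jm N) hP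
  have hcomm := commute_aeval_self_mul_aeval (Jm N) P (derivative P ^ 2)
  rw [map_pow] at hcomm
  have hcubic : ⁅aeval (Jm N) P, ⁅aeval (Jm N) P, ⁅aeval (Jm N) P, Jp N⁆⁆⁆ = 0 := by
    rw [lie_aeval_Jm_lie_aeval_Jm_Jp, ← commute_iff_lie_eq]
    exact (hcomm.smul_right _).neg_right
  rw [NormedSpace.exp_eq_isNilpotent_exp hA, NormedSpace.exp_eq_isNilpotent_exp hA.neg,
    hA.exp_mul_mul_exp_neg_of_lie_lie_lie_eq_zero hcubic, lie_aeval_Jm_lie_aeval_Jm_Jp,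
    lie_aeval_Jm_Jp, ← Rat.cast_smul_eq_qsmul ℂ, mul_add, two_mul]
  push_cast
  module
end
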